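/- arXiv:0807.2960 — 4 statements merged into one kernel-verified Lean document; each statement's English description precedes it below -/
import Mathlib

section
/- Let (w_n) be a positive sequence in GS(w*) with w* > -1, and set γ_n = w_n / (∑_{k=1}^n w_k). Then lim_{n→∞} n γ_n = 1 + w*. -/
/-!
With `S n = ∑ k ∈ Icc 1 n, w k`, the reciprocal `t n = S n / (n * w n)` of `n * γ n` satisfies the
linear recursion `t (n + 1) = c n * t n + 1 / (n + 1)`, where `c n = n * w n / ((n + 1) * w (n + 1))`,
and `w ∈ GS w*` gives `(n + 1) * (1 - c n) → 1 + w* > 0`.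
For such a recursion the error `t n - 1 / (1 + w*)` obeys `e (n + 1) = c n * e n + o(1 / n)` with
`0 ≤ c n ≤ 1 - β / (n + 1)` for `β = (1 + w*) / 2`, so its excess over any `ε > 0` is damped by
`∏ (1 - β / (k + 1)) ≤ exp (-β ∑ 1 / (k + 1)) → 0`, the harmonic series being divergent.
-/

open Filter Finset

def GS (γ : ℝ) (v : ℕ → ℝ) : Prop :=
  (∀ᶠ n in atTop, 0 < v n) ∧
  Tendsto (fun n : ℕ => (n : ℝ) * (1 - v (n - 1) / v n)) atTop (nhds γ)

open Topology

theorem tendsto_sum_Ico_one_div_succ_atTop (N : ℕ) :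
    Tendsto (fun n => ∑ k ∈ Ico N n, 1 / ((k : ℝ) + 1)) atTop atTop := by
  refine (tendsto_atTop_add_const_right _ (-∑ k ∈ range N, 1 / ((k : ℝ) + 1))
    Real.tendsto_sum_range_one_div_nat_succ_atTop).congr' ?_
  filter_upwards [eventually_ge_atTop N] with n hn
  rw [sum_Ico_eq_sub _ hn, sub_eq_add_neg]

theorem le_mul_exp_neg_mul_sum_of_le_one_sub_div_mul {e : ℕ → ℝ} {β : ℝ} {N : ℕ}
    (h0 : ∀ n ≥ N, 0 ≤ e n) (hstep : ∀ n ≥ N, e (n + 1) ≤ (1 - β / (n + 1)) * e n) :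
    ∀ n ≥ N, e n ≤ e N * Real.exp (-β * ∑ k ∈ Ico N n, 1 / ((k : ℝ) + 1)) := by
  refine Nat.le_induction (by simp) fun n hn ih => ?_
  calc e (n + 1) ≤ (1 - β / (n + 1)) * e n := hstep n hn
    _ ≤ Real.exp (-(β / (n + 1))) * e n := by
      gcongr
      · exact h0 n hn
      · linarith [Real.add_one_le_exp (-(β / (n + 1)))]
    _ ≤ Real.exp (-(β / (n + 1))) * (e N * Real.exp (-β * ∑ k ∈ Ico N n, 1 / ((k : ℝ) + 1))) := by
      gcongr
    _ = e N * Real.exp (-β * ∑ k ∈ Ico N (n + 1), 1 / ((k : ℝ) + 1)) := by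
      rw [sum_Ico_succ_top hn, mul_add, Real.exp_add]
      ring_nf

theorem tendsto_zero_of_le_one_sub_div_mul {e : ℕ → ℝ} {β : ℝ} (hβ : 0 < β)
    (h0 : ∀ᶠ n in atTop, 0 ≤ e n)
    (hstep : ∀ᶠ n in atTop, e (n + 1) ≤ (1 - β / (n + 1)) * e n) :
    Tendsto e atTop (𝓝 0) := by
  obtain ⟨N, hN⟩ := eventually_atTop.1 (h0.and hstep)
  have hbound := le_mul_exp_neg_mul_sum_of_le_one_sub_div_mul (fun n hn => (hN n hn).1)
    (fun n hn => (hN n hn).2)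
  have hexp : Tendsto (fun n => e N * Real.exp (-β * ∑ k ∈ Ico N n, 1 / ((k : ℝ) + 1)))
      atTop (𝓝 0) := by
    have := Real.tendsto_exp_neg_atTop_nhds_zero.comp
      ((tendsto_sum_Ico_one_div_succ_atTop N).const_mul_atTop hβ)
    simpa [Function.comp_def, neg_mul] using this.const_mul (e N)
  refine squeeze_zero' ?_ ?_ hexp
  · filter_upwards [eventually_ge_atTop N] with n hn using (hN n hn).1
  · filter_upwards [eventually_ge_atTop N] with n hn using hbound n hn

theorem abs_sub_le_mul_abs_sub_of_eq_mul_add_div {x y c δ β ε : ℝ} {n : ℕ} (hε : 0 ≤ ε)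
    (hc0 : 0 ≤ c) (hc : c ≤ 1 - β / (n + 1)) (hδ : |δ| ≤ β * ε) (hx : x = c * y + δ / (n + 1)) :
    |x| - ε ≤ c * (|y| - ε) := by
  have hδn : |δ| / (n + 1) ≤ (1 - c) * ε :=
    calc |δ| / (n + 1) ≤ β * ε / (n + 1) := by gcongr
      _ = β / (n + 1) * ε := by ring
      _ ≤ (1 - c) * ε := by gcongr; linarith
  have hx' : |x| ≤ c * |y| + |δ| / (n + 1) := by
    rw [hx]
    calc |c * y + δ / (n + 1)| ≤ |c * y| + |δ / (n + 1)| := abs_add_le _ _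
      _ = c * |y| + |δ| / (n + 1) := by
        rw [abs_mul, abs_of_nonneg hc0, abs_div, abs_of_pos (by positivity : (0 : ℝ) < n + 1)]
  nlinarith

theorem tendsto_zero_of_eq_mul_add_div {e c δ : ℕ → ℝ} {β : ℝ} (hβ : 0 < β)
    (hc : ∀ᶠ n in atTop, 0 ≤ c n ∧ c n ≤ 1 - β / (n + 1))
    (hδ : Tendsto δ atTop (𝓝 0))
    (hrec : ∀ᶠ n in atTop, e (n + 1) = c n * e n + δ n / (n + 1)) :
    Tendsto e atTop (𝓝 0) := by
  rw [Metric.tendsto_nhds]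
  intro ε hε
  have hδε : ∀ᶠ n in atTop, |δ n| ≤ β * (ε / 2) := by
    simpa [Real.dist_eq] using (Metric.tendsto_nhds.1 hδ _ (by positivity)).mono fun _ h => h.le
  have hf : Tendsto (fun n => max (|e n| - ε / 2) 0) atTop (𝓝 0) := by
    refine tendsto_zero_of_le_one_sub_div_mul hβ (.of_forall fun _ => le_max_right _ _) ?_
    filter_upwards [hc, hδε, hrec] with n ⟨hc0, hc1⟩ hδn hrecn
    have := abs_sub_le_mul_abs_sub_of_eq_mul_add_div (by positivity) hc0 hc1 hδn hrecn
    refine max_le ?_ (mul_nonneg (hc0.trans hc1) (le_max_right _ _))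
    calc |e (n + 1)| - ε / 2 ≤ c n * (|e n| - ε / 2) := this
      _ ≤ c n * max (|e n| - ε / 2) 0 := by gcongr; exact le_max_left _ _
      _ ≤ (1 - β / (n + 1)) * max (|e n| - ε / 2) 0 := by gcongr
  filter_upwards [hf.eventually_lt_const (half_pos hε)] with n hn
  rw [Real.dist_eq, sub_zero]
  linarith [le_max_left (|e n| - ε / 2) 0]

theorem tendsto_one_of_tendsto_succ_mul_one_sub {r : ℕ → ℝ} {a : ℝ}
    (h : Tendsto (fun n : ℕ => ((n : ℝ) + 1) * (1 - r n)) atTop (𝓝 a)) :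
    Tendsto r atTop (𝓝 1) := by
  have h0 := h.div_atTop (tendsto_atTop_add_const_right _ 1 tendsto_natCast_atTop_atTop)
  have h1 := h0.const_sub 1
  rw [sub_zero] at h1
  refine h1.congr fun n => ?_
  field_simp
  ring

theorem tendsto_inv_of_eq_mul_add_one_div {t c : ℕ → ℝ} {α : ℝ} (hα : 0 < α)
    (hc : Tendsto (fun n : ℕ => ((n : ℝ) + 1) * (1 - c n)) atTop (𝓝 α))
    (hrec : ∀ᶠ n in atTop, t (n + 1) = c n * t n + 1 / (n + 1)) :
    Tendsto t atTop (𝓝 α⁻¹) := by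
  rw [← tendsto_sub_nhds_zero_iff]
  refine tendsto_zero_of_eq_mul_add_div (half_pos hα)
    (c := c) (δ := fun n => 1 - (n + 1) * (1 - c n) / α) ?_ ?_ ?_
  · filter_upwards [(tendsto_one_of_tendsto_succ_mul_one_sub hc).eventually_const_le zero_lt_one,
      hc.eventually_const_lt (half_lt_self hα)] with n hc0 hcα
    refine ⟨hc0, ?_⟩
    have : α / 2 / (n + 1) < 1 - c n := (div_lt_iff₀' (by positivity)).2 hcα
    linarith
  · simpa [hα.ne'] using (hc.div_const α).const_sub 1
  · filter_upwards [hrec] with n hrecn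
    rw [hrecn]
    field_simp
    ring

theorem GS.tendsto_succ_mul_one_sub {γ : ℝ} {v : ℕ → ℝ} (hv : GS γ v) :
    Tendsto (fun n : ℕ => ((n : ℝ) + 1) * (1 - v n / v (n + 1))) atTop (𝓝 γ) := by
  simpa [Function.comp_def] using hv.2.comp (tendsto_add_atTop_nat 1)

theorem stmt_1 (w : ℕ → ℝ) (wstar : ℝ) (hpos : ∀ n, 1 ≤ n → 0 < w n)
    (hw : GS wstar w) (hwstar : -1 < wstar)
    (γ : ℕ → ℝ) (hγ : ∀ n, γ n = w n / ∑ k ∈ Icc 1 n, w k) :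
    Tendsto (fun n : ℕ => (n : ℝ) * γ n) atTop (nhds (1 + wstar)) := by
  set c : ℕ → ℝ := fun n => n * w n / ((n + 1) * w (n + 1))
  have hc : Tendsto (fun n : ℕ => ((n : ℝ) + 1) * (1 - c n)) atTop (𝓝 (1 + wstar)) := by
    have hshift := hw.tendsto_succ_mul_one_sub
    rw [add_comm]
    refine (hshift.add (tendsto_one_of_tendsto_succ_mul_one_sub hshift)).congr fun n => ?_
    have hw_succ := (hpos (n + 1) (by omega)).ne'
    simp only [c]
    field_simp
    ring
  have hrec : ∀ᶠ n in atTop,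
      (((n + 1 : ℕ) : ℝ) * γ (n + 1))⁻¹ = c n * ((n : ℝ) * γ n)⁻¹ + 1 / (n + 1) := by
    filter_upwards [eventually_ge_atTop 1] with n hn
    have hS : 0 < ∑ k ∈ Icc 1 n, w k :=
      sum_pos (fun k hk => hpos k (mem_Icc.1 hk).1) (nonempty_Icc.2 hn)
    have hw_n := (hpos n hn).ne'
    have hw_succ := (hpos (n + 1) (by omega)).ne'
    rw [hγ, hγ, sum_Icc_succ_top (by omega)]
    simp only [c]
    push_cast
    field_simp
  have ht := tendsto_inv_of_eq_mul_add_one_div (t := fun n : ℕ => ((n : ℝ) * γ n)⁻¹)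
    (by linarith) hc hrec
  simpa using ht.inv₀ (inv_ne_zero (by linarith))
end

section
/- Let (w_n) be a positive sequence in GS(w*) with w* > -1, and set γ_n = w_n / (∑_{k=1}^n w_k). Then the sequence of partial sums (∑_{k=1}^n w_k) belongs to GS(1 + w*), and consequently (γ_n) belongs to GS(-1). -/
/-!
Write `S n = ∑_{k ≤ n} w k` and `b n = n * w n`. The class `GS` is multiplicative
(`GS α * GS β ⊆ GS (α + β)`, inversion negates the index, `n ∈ GS 1`), so `b ∈ GS (1 + w*)`.
Since `1 + w* > 0`, `b` eventually increases and tends to infinity (the harmonic series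
diverges). Stolz–Cesàro then gives `S n / b n → 1 / (1 + w*)`, because
`(S (n+1) - S n) / (b (n+1) - b n) = ((n+1) (1 - b n / b (n+1)))⁻¹`. This limit is exactly
`S ∈ GS (1 + w*)`, and then `γ = w / S ∈ GS (w* - (1 + w*))`.
-/

open Filter Finset

open Topology Asymptotics

theorem tendsto_div_of_strictMono_of_tendsto_sub_div_sub {a b : ℕ → ℝ} {l : ℝ}
    (hb : Tendsto b atTop atTop) (hmono : StrictMono b)
    (h : Tendsto (fun n => (a (n + 1) - a n) / (b (n + 1) - b n)) atTop (𝓝 l)) :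
    Tendsto (fun n => a n / b n) atTop (𝓝 l) := by
  set x : ℕ → ℝ := fun n => a n - l * b n
  have hΔb : ∀ n, b (n + 1) - b n ≠ 0 := fun n => sub_ne_zero.2 (hmono n.lt_succ_self).ne'
  have hΔ : (fun n => x (n + 1) - x n) =o[atTop] fun n => b (n + 1) - b n := by
    refine (isLittleO_iff_tendsto' (.of_forall fun n hn => absurd hn (hΔb n))).2 ?_
    refine (sub_self l ▸ h.sub_const l).congr fun n => ?_
    field_simp [hΔb n]
    ring
  have hsum := hΔ.sum_range (fun n => sub_nonneg.2 (hmono.monotone n.le_succ)) (by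
    simpa only [sum_range_sub, ← sub_eq_add_neg] using tendsto_atTop_add_const_right _ (-b 0) hb)
  simp only [sum_range_sub] at hsum
  have hconst (c : ℝ) : (fun _ : ℕ => c) =o[atTop] b :=
    isLittleO_const_left.2 (.inr (tendsto_norm_atTop_atTop.comp hb))
  have hx : x =o[atTop] b := by
    simpa using (hsum.trans_isBigO ((isBigO_refl b _).sub (hconst (b 0)).isBigO)).add
      (hconst (x 0))
  refine (zero_add l ▸ hx.tendsto_div_nhds_zero.add_const l).congr' ?_
  filter_upwards [hb.eventually_ne_atTop 0] with n hn
  field_simp [x]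
  ring

theorem tendsto_div_of_tendsto_sub_div_sub {a b : ℕ → ℝ} {l : ℝ}
    (hb : Tendsto b atTop atTop) (hmono : ∀ᶠ n in atTop, b n < b (n + 1))
    (h : Tendsto (fun n => (a (n + 1) - a n) / (b (n + 1) - b n)) atTop (𝓝 l)) :
    Tendsto (fun n => a n / b n) atTop (𝓝 l) := by
  obtain ⟨N, hN⟩ := eventually_atTop.1 hmono
  rw [← tendsto_add_atTop_iff_nat N] at hb h ⊢
  refine tendsto_div_of_strictMono_of_tendsto_sub_div_sub hb
    (strictMono_nat_of_lt_succ fun n => ?_) (by simpa only [add_right_comm _ 1 N] using h)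
  simpa only [add_right_comm _ 1 N] using hN (n + N) (Nat.le_add_left N n)

theorem tendsto_sum_range_one_div_add_atTop (N : ℕ) :
    Tendsto (fun k => ∑ j ∈ range k, 1 / ((N : ℝ) + j + 1)) atTop atTop := by
  refine tendsto_atTop_mono (fun k => ?_)
    (Real.tendsto_sum_range_one_div_nat_succ_atTop.const_mul_atTop (inv_pos.2 N.cast_add_one_pos))
  rw [mul_sum]
  gcongr with j
  rw [inv_mul_eq_div, div_div, div_le_div_iff_of_pos_left one_pos (by positivity) (by positivity)]
  nlinarith [(N.cast_nonneg : (0 : ℝ) ≤ N), (j.cast_nonneg : (0 : ℝ) ≤ j)]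

namespace GS

variable {α β : ℝ} {u v : ℕ → ℝ}

theorem eventually_pos_pred (hv : GS α v) : ∀ᶠ n in atTop, 0 < v (n - 1) :=
  (tendsto_sub_atTop_nat 1).eventually hv.1

theorem tendsto_ratio (hv : GS α v) : Tendsto (fun n => v (n - 1) / v n) atTop (𝓝 1) := by
  have h := (tendsto_const_nhds (x := (1 : ℝ))).sub
    (tendsto_inv_atTop_zero.comp tendsto_natCast_atTop_atTop |>.mul hv.2)
  rw [zero_mul, sub_zero] at h
  refine h.congr' ?_
  filter_upwards [eventually_ne_atTop 0] with n hn
  have : (n : ℝ) ≠ 0 := Nat.cast_ne_zero.2 hn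
  simp only [Function.comp_apply]
  field_simp
  ring

theorem natCast : GS 1 fun n => (n : ℝ) := by
  refine ⟨?_, tendsto_const_nhds.congr' ?_⟩
  · filter_upwards [eventually_gt_atTop 0] with n hn using Nat.cast_pos.2 hn
  · filter_upwards [eventually_gt_atTop 0] with n hn
    have : (n : ℝ) ≠ 0 := Nat.cast_ne_zero.2 hn.ne'
    rw [Nat.cast_pred hn]
    field_simp
    ring

theorem mul (hv : GS α v) (hu : GS β u) : GS (α + β) fun n => v n * u n := by
  refine ⟨?_, ?_⟩
  · filter_upwards [hv.1, hu.1] with n hvn hun using mul_pos hvn hun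
  · have h := hv.2.add (hv.tendsto_ratio.mul hu.2)
    rw [one_mul] at h
    refine h.congr fun n => ?_
    rw [mul_div_mul_comm]
    ring

theorem inv (hv : GS α v) : GS (-α) fun n => (v n)⁻¹ := by
  refine ⟨?_, ?_⟩
  · filter_upwards [hv.1] with n hvn using inv_pos.2 hvn
  · have h := (hv.2.div hv.tendsto_ratio one_ne_zero).neg
    rw [div_one] at h
    refine h.congr' ?_
    filter_upwards [hv.1, hv.eventually_pos_pred] with n hvn hvn'
    simp only [Pi.div_apply]
    field_simp
    ring

theorem div (hv : GS α v) (hu : GS β u) : GS (α - β) fun n => v n / u n := by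
  simpa only [sub_eq_add_neg, div_eq_mul_inv] using hv.mul hu.inv

theorem tendsto_atTop (hv : GS α v) (hα : 0 < α) : Tendsto v atTop atTop := by
  obtain ⟨N, hN⟩ := eventually_atTop.1
    ((hv.2.eventually (lt_mem_nhds (half_lt_self hα))).and hv.1)
  set H : ℕ → ℝ := fun k => ∑ j ∈ range k, 1 / ((N : ℝ) + j + 1)
  have hvN : 0 < v N := (hN N le_rfl).2
  have hgrowth : ∀ k, v N * (1 + α / 2 * H k) ≤ v (N + k) := by
    intro k
    induction k with
    | zero => simp [H]
    | succ k ih =>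
      obtain ⟨hlt, hpos⟩ := hN (N + k + 1) (by omega)
      have hH : 0 ≤ H k := sum_nonneg fun j _ => by positivity
      have hn : (0 : ℝ) < N + k + 1 := by positivity
      simp only [Nat.add_sub_cancel, Nat.cast_add, Nat.cast_one] at hlt
      rw [mul_sub, mul_one, lt_sub_iff_add_lt, mul_div_assoc', ← lt_sub_iff_add_lt',
        div_lt_iff₀ hpos] at hlt
      have hvN_le : v N ≤ v (N + k) := (le_mul_of_one_le_right hvN.le
        (le_add_of_nonneg_right (mul_nonneg (half_pos hα).le hH))).trans ih
      have hinc : v (N + k) < v (N + k + 1) := by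
        nlinarith [mul_pos (half_pos hα) hpos]
      have hstep : α / 2 * v N ≤ ((N : ℝ) + k + 1) * (v (N + k + 1) - v (N + k)) := by
        nlinarith [mul_le_mul_of_nonneg_left (hvN_le.trans hinc.le) (half_pos hα).le]
      simp only [H, sum_range_succ, ← add_assoc]
      rw [← div_le_iff₀' hn] at hstep
      calc v N * (1 + α / 2 * (H k + 1 / (N + k + 1)))
          = v N * (1 + α / 2 * H k) + α / 2 * v N / (N + k + 1) := by ring
        _ ≤ v (N + k + 1) := by linarith
  rw [← tendsto_add_atTop_iff_nat N]
  refine tendsto_atTop_mono (fun k => add_comm k N ▸ hgrowth k) ?_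
  exact tendsto_atTop_add_const_left _ 1
    ((tendsto_sum_range_one_div_add_atTop N).const_mul_atTop (half_pos hα)) |>.const_mul_atTop hvN

theorem tendsto_sum_Icc_div (hw : GS α v) (hα : -1 < α) :
    Tendsto (fun n => (∑ k ∈ Icc 1 n, v k) / (n * v n)) atTop (𝓝 (1 + α)⁻¹) := by
  have hb : GS (1 + α) fun n => (n : ℝ) * v n := natCast.mul hw
  have hα' : 0 < 1 + α := by linarith
  have hΔ := hb.2.comp (tendsto_add_atTop_nat 1)
  simp only [Function.comp_def, Nat.add_sub_cancel, Nat.cast_add, Nat.cast_one] at hΔ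
  have hpos := (tendsto_add_atTop_nat 1).eventually hw.1
  apply tendsto_div_of_tendsto_sub_div_sub (hb.tendsto_atTop hα')
  · filter_upwards [hΔ.eventually_const_lt hα', hpos] with n h hn
    push_cast
    rwa [mul_pos_iff_of_pos_left (by positivity), sub_pos, div_lt_one (by positivity)] at h
  · refine (hΔ.inv₀ hα'.ne').congr' ?_
    filter_upwards [hpos] with n hn
    rw [sum_Icc_succ_top (by omega)]
    push_cast
    field_simp
    ring

theorem sum_Icc (hw : GS α v) (hα : -1 < α) : GS (1 + α) fun n => ∑ k ∈ Icc 1 n, v k := by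
  have h := hw.tendsto_sum_Icc_div hα
  have hL : 0 < (1 + α)⁻¹ := inv_pos.2 (by linarith)
  have hSpos : ∀ᶠ n in atTop, 0 < ∑ k ∈ Icc 1 n, v k := by
    filter_upwards [h.eventually (eventually_gt_nhds hL), (natCast.mul hw).1] with n hq hb
    simpa [div_mul_cancel₀ _ hb.ne'] using mul_pos hq hb
  refine ⟨hSpos, (inv_inv (1 + α) ▸ h.inv₀ hL.ne').congr' ?_⟩
  filter_upwards [hSpos, eventually_ne_atTop 0] with n hS hn
  obtain ⟨m, rfl⟩ := Nat.exists_eq_succ_of_ne_zero hn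
  rw [sum_Icc_succ_top (by omega)] at hS ⊢
  simp only [Nat.succ_sub_one]
  field_simp
  ring

end GS

theorem stmt_2_general (w : ℕ → ℝ) (wstar : ℝ)
    (hw : GS wstar w) (hwstar : -1 < wstar)
    (γ : ℕ → ℝ) (hγ : ∀ n, γ n = w n / ∑ k ∈ Icc 1 n, w k) :
    GS (1 + wstar) (fun n => ∑ k ∈ Icc 1 n, w k) ∧ GS (-1) γ := by
  have hS := hw.sum_Icc hwstar
  refine ⟨hS, ?_⟩
  rw [funext hγ]
  convert hw.div hS using 1
  ring

theorem stmt_2 (w : ℕ → ℝ) (wstar : ℝ) (hpos : ∀ n, 1 ≤ n → 0 < w n)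
    (hw : GS wstar w) (hwstar : -1 < wstar)
    (γ : ℕ → ℝ) (hγ : ∀ n, γ n = w n / ∑ k ∈ Icc 1 n, w k) :
    GS (1 + wstar) (fun n => ∑ k ∈ Icc 1 n, w k) ∧ GS (-1) γ :=
  stmt_2_general w wstar hw hwstar γ hγ
end

section
/- Let (v_n) ∈ GS(v*), let (γ_n) ∈ GS(-α) with α ∈ (1/2,1], γ_n ∈ (0,1), ∑ γ_n = ∞, and ξ = lim (n γ_n)^{-1} exists in [0,∞) with m - v*ξ > 0 for some m > 0. Then for any positive sequence (α_n) with α_n → 0 and any δ ∈ ℝ, setting Π_n = ∏_{j=1}^n (1 - γ_j), one has lim_{n→∞} v_n Π_n^m [∑_{k=1}^n Π_k^{-m} (γ_k/v_k) α_k + δ] = 0. -/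
/-!
Put `w n = v n * Π n ^ m`. Since `n * log (v n / v (n - 1)) → v*` and `(n γ n)⁻¹ → ξ`,
eventually `v (n + 1) ≤ v n * exp (κ γ (n + 1))` for any `κ > v* ξ`, while
`Π (n + 1) ^ m ≤ Π n ^ m * exp (-m γ (n + 1))`. Hence `w (n + 1) ≤ w n * exp (-c γ (n + 1))`
for some `c > 0` and all large `n`, so `w n → 0` because `∑ γ n = ∞`. Convexity of `exp` gives
`exp (-c x) ≤ 1 - x (1 - exp (-c))` on `[0, 1]`, which makes
`w n * ∑_{M < k ≤ n} γ k / w k ≤ (1 - exp (-c))⁻¹` an inductive invariant. The sequence in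
question is `w n * (∑ k ≤ n, (γ k / w k) * α k + δ)`, and this uniform bound lets `α k → 0` pass
through the sum.
-/

open Filter Finset

open Real Topology

theorem exp_neg_mul_le_one_sub_mul (c : ℝ) {x : ℝ} (hx₀ : 0 ≤ x) (hx₁ : x ≤ 1) :
    exp (-(c * x)) ≤ 1 - x * (1 - exp (-c)) := by
  have h := convexOn_exp.2 (Set.mem_univ 0) (Set.mem_univ (-c)) (sub_nonneg.2 hx₁) hx₀
    (sub_add_cancel 1 x)
  simp only [smul_eq_mul, mul_zero, zero_add, exp_zero, mul_one] at h
  calc exp (-(c * x)) = exp (x * -c) := by ring_nf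
    _ ≤ 1 - x + x * exp (-c) := h
    _ = 1 - x * (1 - exp (-c)) := by ring

theorem rpow_one_sub_le_exp {x : ℝ} (m : ℝ) (hx : x ≤ 1) (hm : 0 ≤ m) :
    (1 - x) ^ m ≤ exp (-(m * x)) := by
  calc (1 - x) ^ m ≤ exp (-x) ^ m := rpow_le_rpow (sub_nonneg.2 hx) (one_sub_le_exp_neg x) hm
    _ = exp (-(m * x)) := by rw [← exp_mul]; ring_nf

-- The paper's `Π_n`.
def prodOneSub (γ : ℕ → ℝ) (n : ℕ) : ℝ := ∏ j ∈ Icc 1 n, (1 - γ j)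

theorem prodOneSub_succ (γ : ℕ → ℝ) (n : ℕ) :
    prodOneSub γ (n + 1) = prodOneSub γ n * (1 - γ (n + 1)) :=
  prod_Icc_succ_top (Nat.le_add_left 1 n) _

theorem prodOneSub_pos {γ : ℕ → ℝ} (hγ : ∀ n, 1 ≤ n → γ n < 1) (n : ℕ) : 0 < prodOneSub γ n :=
  prod_pos fun j hj => sub_pos.2 (hγ j (mem_Icc.1 hj).1)

theorem GS.tendsto_mul_log_div {γ : ℝ} {v : ℕ → ℝ} (hv : GS γ v) :
    Tendsto (fun n : ℕ => (n : ℝ) * log (v n / v (n - 1))) atTop (𝓝 γ) := by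
  set x : ℕ → ℝ := fun n => 1 - v (n - 1) / v n
  have hx : Tendsto x atTop (𝓝 0) := by
    have := hv.2.mul (tendsto_inv_atTop_zero.comp tendsto_natCast_atTop_atTop)
    rw [mul_zero] at this
    refine this.congr' ?_
    filter_upwards [eventually_ne_atTop 0] with n hn
    simp [x, field]
  have hupper : Tendsto (fun n : ℕ => (n : ℝ) * x n / (1 - x n)) atTop (𝓝 γ) := by
    have h := hv.2.div (tendsto_const_nhds.sub hx) (by norm_num : (1 : ℝ) - 0 ≠ 0)
    rwa [sub_zero, div_one] at h
  have hpos : ∀ᶠ n : ℕ in atTop, 0 < v n ∧ 0 < v (n - 1) :=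
    hv.1.and ((tendsto_sub_atTop_nat 1).eventually hv.1)
  refine tendsto_of_tendsto_of_tendsto_of_le_of_le' hv.2 hupper ?_ ?_
  · filter_upwards [hpos] with n ⟨hn, hn'⟩
    gcongr
    simpa using one_sub_inv_le_log_of_pos (div_pos hn hn')
  · filter_upwards [hpos] with n ⟨hn, hn'⟩
    rw [mul_div_assoc]
    gcongr
    have : x n / (1 - x n) = v n / v (n - 1) - 1 := by simp [x]; field_simp
    rw [this]
    exact log_le_sub_one_of_pos (div_pos hn hn')

theorem GS.eventually_le_mul_exp {vstar ξ κ : ℝ} {v γ : ℕ → ℝ} (hv : GS vstar v)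
    (hξ : Tendsto (fun n : ℕ => ((n : ℝ) * γ n)⁻¹) atTop (𝓝 ξ)) (hγ : ∀ᶠ n in atTop, 0 < γ n)
    (hκ : vstar * ξ < κ) : ∀ᶠ n in atTop, v n ≤ v (n - 1) * exp (κ * γ n) := by
  filter_upwards [(hv.tendsto_mul_log_div.mul hξ).eventually_lt_const hκ, hγ, hv.1,
    (tendsto_sub_atTop_nat 1).eventually hv.1, eventually_ne_atTop 0] with n hlt hγn hvn hvn' hn
  have hlog : log (v n / v (n - 1)) ≤ κ * γ n := by
    calc log (v n / v (n - 1)) = (n * log (v n / v (n - 1))) * ((n : ℝ) * γ n)⁻¹ * γ n := by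
          field_simp
      _ ≤ κ * γ n := by gcongr
  rwa [log_le_iff_le_exp (div_pos hvn hvn'), div_le_iff₀' hvn'] at hlog

theorem GS.eventually_mul_rpow_prodOneSub_succ_le {vstar ξ m c : ℝ} {v γ : ℕ → ℝ}
    (hv : GS vstar v) (hξ : Tendsto (fun n : ℕ => ((n : ℝ) * γ n)⁻¹) atTop (𝓝 ξ))
    (hγ : ∀ n, 1 ≤ n → γ n ∈ Set.Ioo (0 : ℝ) 1) (hm : 0 ≤ m) (hc : c < m - vstar * ξ) :
    ∀ᶠ n in atTop, v (n + 1) * prodOneSub γ (n + 1) ^ m ≤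
      v n * prodOneSub γ n ^ m * exp (-(c * γ (n + 1))) := by
  have hstep := (tendsto_add_atTop_nat 1).eventually <|
    hv.eventually_le_mul_exp (κ := m - c) hξ (eventually_atTop.2 ⟨1, fun n hn => (hγ n hn).1⟩)
      (by linarith)
  filter_upwards [hstep, hv.1] with n hvn hvpos
  rw [Nat.add_sub_cancel] at hvn
  have hγn := hγ (n + 1) (Nat.le_add_left 1 n)
  have hP := prodOneSub_pos (fun k hk => (hγ k hk).2) n
  calc v (n + 1) * prodOneSub γ (n + 1) ^ m
      = v (n + 1) * (prodOneSub γ n ^ m * (1 - γ (n + 1)) ^ m) := by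
        rw [prodOneSub_succ, mul_rpow hP.le (sub_nonneg.2 hγn.2.le)]
    _ ≤ v n * exp ((m - c) * γ (n + 1)) * (prodOneSub γ n ^ m * exp (-(m * γ (n + 1)))) := by
        gcongr
        · exact mul_nonneg (rpow_nonneg hP.le m) (rpow_nonneg (sub_nonneg.2 hγn.2.le) m)
        · exact rpow_one_sub_le_exp m hγn.2.le hm
    _ = v n * prodOneSub γ n ^ m * exp (-(c * γ (n + 1))) := by
        rw [mul_mul_mul_comm, ← exp_add]; ring_nf

section ExpDecay

variable {w γ : ℕ → ℝ} {c : ℝ} {N : ℕ}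

theorem tendsto_zero_of_le_mul_exp (hpos : ∀ n ≥ N, 0 < w n)
    (hstep : ∀ n ≥ N, w (n + 1) ≤ w n * exp (-(c * γ (n + 1)))) (hc : 0 < c)
    (hdiv : Tendsto (fun n => ∑ k ∈ Icc 1 n, γ k) atTop atTop) : Tendsto w atTop (𝓝 0) := by
  set Γ := fun n => ∑ k ∈ Icc 1 n, γ k
  have hanti : AntitoneOn (fun n => w n * exp (c * Γ n)) {n | N ≤ n} :=
    antitoneOn_nat_Ici_of_succ_le fun n hn => by
      calc w (n + 1) * exp (c * Γ (n + 1))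
          ≤ w n * exp (-(c * γ (n + 1))) * exp (c * Γ (n + 1)) := by gcongr; exact hstep n hn
        _ = w n * exp (c * Γ n) := by
          rw [show Γ (n + 1) = Γ n + γ (n + 1) from sum_Icc_succ_top (Nat.le_add_left 1 n) γ,
            mul_assoc, ← exp_add]
          ring_nf
  have hbound : ∀ n ≥ N, w n ≤ w N * exp (c * Γ N) * exp (-(c * Γ n)) := fun n hn =>
    calc w n = w n * exp (c * Γ n) * exp (-(c * Γ n)) := by rw [mul_assoc, ← exp_add]; simp
      _ ≤ w N * exp (c * Γ N) * exp (-(c * Γ n)) :=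
        mul_le_mul_of_nonneg_right (hanti (le_refl N) hn hn) (exp_pos _).le
  have hlim : Tendsto (fun n => w N * exp (c * Γ N) * exp (-(c * Γ n))) atTop (𝓝 0) := by
    simpa using ((tendsto_exp_atBot.comp tendsto_neg_atTop_atBot).comp
      (hdiv.const_mul_atTop hc)).const_mul (w N * exp (c * Γ N))
  exact squeeze_zero' (eventually_atTop.2 ⟨N, fun n hn => (hpos n hn).le⟩)
    (eventually_atTop.2 ⟨N, hbound⟩) hlim

theorem mul_sum_Ioc_div_le (hpos : ∀ n ≥ N, 0 < w n)
    (hstep : ∀ n ≥ N, w (n + 1) ≤ w n * exp (-(c * γ (n + 1)))) (hc : 0 < c)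
    (hγ : ∀ n > N, γ n ∈ Set.Icc 0 1) {M n : ℕ} (hM : N ≤ M) (hn : M ≤ n) :
    w n * ∑ k ∈ Ioc M n, γ k / w k ≤ (1 - exp (-c))⁻¹ := by
  have hK : 0 < 1 - exp (-c) := sub_pos.2 (exp_lt_one_iff.2 (neg_lt_zero.2 hc))
  induction n, hn using Nat.le_induction with
  | base => simpa using hK.le
  | succ n hMn ih =>
    have hT : 0 ≤ ∑ k ∈ Ioc M n, γ k / w k := sum_nonneg fun k hk =>
      div_nonneg (hγ k (hM.trans_lt (mem_Ioc.1 hk).1)).1 (hpos k (by grind)).le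
    have hγn := hγ (n + 1) (by omega)
    rw [sum_Ioc_succ_top hMn, mul_add, mul_div_cancel₀ _ (hpos (n + 1) (by omega)).ne']
    calc w (n + 1) * ∑ k ∈ Ioc M n, γ k / w k + γ (n + 1)
        ≤ w n * exp (-(c * γ (n + 1))) * ∑ k ∈ Ioc M n, γ k / w k + γ (n + 1) := by
          gcongr
          exact hstep n (hM.trans hMn)
      _ = exp (-(c * γ (n + 1))) * (w n * ∑ k ∈ Ioc M n, γ k / w k) + γ (n + 1) := by ring
      _ ≤ exp (-(c * γ (n + 1))) * (1 - exp (-c))⁻¹ + γ (n + 1) := by gcongr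
      _ ≤ (1 - γ (n + 1) * (1 - exp (-c))) * (1 - exp (-c))⁻¹ + γ (n + 1) := by
          gcongr
          exact exp_neg_mul_le_one_sub_mul c hγn.1 hγn.2
      _ = (1 - exp (-c))⁻¹ := by field_simp; ring

end ExpDecay

theorem tendsto_mul_sum_mul_of_tendsto_zero {w g b : ℕ → ℝ} {C : ℝ}
    (hw : Tendsto w atTop (𝓝 0)) (hb : Tendsto b atTop (𝓝 0))
    (hC : ∀ᶠ M in atTop, ∀ n ≥ M, |w n| * ∑ k ∈ Ioc M n, |g k| ≤ C) :
    Tendsto (fun n => w n * ∑ k ∈ Icc 1 n, g k * b k) atTop (𝓝 0) := by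
  rw [NormedAddGroup.tendsto_nhds_zero]
  intro ε hε
  set η := ε / (2 * (|C| + 1))
  have hη : 0 < η := by positivity
  obtain ⟨M, hM⟩ := ((NormedAddGroup.tendsto_nhds_zero.1 hb η hη).and hC).exists_forall_of_atTop
  have hhead : Tendsto (fun n => w n * ∑ k ∈ Icc 1 M, g k * b k) atTop (𝓝 0) := by
    simpa using hw.mul_const (∑ k ∈ Icc 1 M, g k * b k)
  filter_upwards [NormedAddGroup.tendsto_nhds_zero.1 hhead (ε / 2) (half_pos hε),
    eventually_ge_atTop M] with n hn hMn
  have htail : |w n * ∑ k ∈ Ioc M n, g k * b k| ≤ η * C := by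
    calc |w n * ∑ k ∈ Ioc M n, g k * b k| ≤ |w n| * ∑ k ∈ Ioc M n, |g k| * η := by
          rw [abs_mul]
          gcongr
          refine (abs_sum_le_sum_abs _ _).trans (sum_le_sum fun k hk => ?_)
          rw [abs_mul]
          gcongr
          exact (hM k (mem_Ioc.1 hk).1.le).1.le
      _ = η * (|w n| * ∑ k ∈ Ioc M n, |g k|) := by rw [← sum_mul]; ring
      _ ≤ η * C := by gcongr; exact (hM M le_rfl).2 n hMn
  have hηC : η * C < ε / 2 := by
    calc η * C ≤ η * |C| := by gcongr; exact le_abs_self C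
      _ < η * (|C| + 1) := by gcongr; linarith
      _ = ε / 2 := by simp only [η]; field_simp
  have hIcc : ∀ n, Icc 1 n = Ioc 0 n := fun n => Icc_add_one_left_eq_Ioc 0 n
  rw [Real.norm_eq_abs] at hn ⊢
  rw [hIcc, ← sum_Ioc_consecutive _ (Nat.zero_le M) hMn, ← hIcc, mul_add]
  linarith [abs_add_le (w n * ∑ k ∈ Icc 1 M, g k * b k) (w n * ∑ k ∈ Ioc M n, g k * b k)]

theorem stmt_5_general (v γ : ℕ → ℝ) (vstar ξ m : ℝ)
    (hv : GS vstar v)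
    (hγ01 : ∀ n, 1 ≤ n → γ n ∈ Set.Ioo (0 : ℝ) 1)
    (hdiv : Tendsto (fun n => ∑ k ∈ Icc 1 n, γ k) atTop atTop)
    (hξlim : Tendsto (fun n : ℕ => ((n : ℝ) * γ n)⁻¹) atTop (nhds ξ))
    (hm : 0 < m) (hmξ : 0 < m - vstar * ξ)
    (a : ℕ → ℝ) (ha0 : Tendsto a atTop (nhds 0))
    (δ : ℝ) :
    Tendsto
      (fun n : ℕ =>
        v n * (∏ j ∈ Icc 1 n, (1 - γ j)) ^ m *
          (∑ k ∈ Icc 1 n, ((∏ j ∈ Icc 1 k, (1 - γ j)) ^ m)⁻¹ * (γ k / v k) * a k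
            + δ))
      atTop (nhds 0) := by
  set w : ℕ → ℝ := fun n => v n * prodOneSub γ n ^ m
  obtain ⟨c, hc, hcm⟩ := exists_between hmξ
  obtain ⟨N, hN⟩ := ((hv.eventually_mul_rpow_prodOneSub_succ_le hξlim hγ01 hm.le hcm).and
    hv.1).exists_forall_of_atTop
  have hpos : ∀ n ≥ N, 0 < w n := fun n hn =>
    mul_pos (hN n hn).2 (rpow_pos_of_pos (prodOneSub_pos (fun k hk => (hγ01 k hk).2) n) m)
  have hstep : ∀ n ≥ N, w (n + 1) ≤ w n * exp (-(c * γ (n + 1))) := fun n hn => (hN n hn).1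
  have hγ : ∀ n > N, γ n ∈ Set.Icc 0 1 := fun n hn => Set.Ioo_subset_Icc_self (hγ01 n (by omega))
  have hw : Tendsto w atTop (𝓝 0) := tendsto_zero_of_le_mul_exp hpos hstep hc hdiv
  have hbound : ∀ᶠ M in atTop, ∀ n ≥ M,
      |w n| * ∑ k ∈ Ioc M n, |γ k / w k| ≤ (1 - exp (-c))⁻¹ :=
    eventually_atTop.2 ⟨N, fun M hM n hn => by
      rw [abs_of_pos (hpos n (hM.trans hn)), sum_congr rfl fun k hk =>
        abs_of_nonneg (div_nonneg (hγ k (by grind)).1 (hpos k (by grind)).le)]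
      exact mul_sum_Ioc_div_le hpos hstep hc hγ hM hn⟩
  have hlim := (tendsto_mul_sum_mul_of_tendsto_zero hw ha0 hbound).add (hw.mul_const δ)
  rw [zero_add, zero_mul] at hlim
  refine hlim.congr fun n => ?_
  simp only [w, prodOneSub, div_eq_mul_inv, mul_inv, mul_add, mul_sum]
  exact congrArg (· + _) (sum_congr rfl fun k _ => by ring)

theorem stmt_5 (v γ : ℕ → ℝ) (vstar α ξ m : ℝ)
    (hv : GS vstar v) (hγ : GS (-α) γ) (hα : 1/2 < α ∧ α ≤ 1)
    (hγ01 : ∀ n, 1 ≤ n → γ n ∈ Set.Ioo (0 : ℝ) 1)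
    (hdiv : Tendsto (fun n => ∑ k ∈ Icc 1 n, γ k) atTop atTop)
    (hξ : 0 ≤ ξ)
    (hξlim : Tendsto (fun n : ℕ => ((n : ℝ) * γ n)⁻¹) atTop (nhds ξ))
    (hm : 0 < m) (hmξ : 0 < m - vstar * ξ)
    (a : ℕ → ℝ) (ha : ∀ n, 0 < a n) (ha0 : Tendsto a atTop (nhds 0))
    (δ : ℝ) :
    Tendsto
      (fun n : ℕ =>
        v n * (∏ j ∈ Icc 1 n, (1 - γ j)) ^ m *
          (∑ k ∈ Icc 1 n, ((∏ j ∈ Icc 1 k, (1 - γ j)) ^ m)⁻¹ * (γ k / v k) * a k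
            + δ))
      atTop (nhds 0) :=
  stmt_5_general v γ vstar ξ m hv hγ01 hdiv hξlim hm hmξ a ha0 δ
end

section
/- Let (γ_n) ∈ GS(-α) with α ∈ (1/2, 1], γ_n ∈ (0,1), and suppose ξ = lim_{n→∞} (n γ_n)^{-1} exists and satisfies 2 - (α - ad)ξ > 0 for given a, d with α - ad real. Set Π_n = ∏_{j=1}^n (1 - γ_j), s_n = ∑_{k=1}^n γ_k, and H_n^2 = Π_n^2 γ_n^{-1} h_n^d where (γ_n^{-1} h_n^d) ∈ GS(α - ad). Then ln(H_n^{-2}) = (2 - ξ(α - ad)) s_n + o(s_n); in particular H_n^{-2} → ∞. -/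
open Filter Finset

/-!
Write `u n = (γ n)⁻¹ * h n ^ d`. Then `log H_n⁻² = ∑_{k ≤ n} A_k - log u₀` with
`A_k = -2 log (1 - γ_k) - (log u_k - log u_{k-1})`, and `A_k / γ_k → 2 - ξ (α - a d)`:
`-log (1 - γ_k) ~ γ_k` since `γ_k → 0`, while `k (log u_k - log u_{k-1}) → α - a d` for
`u ∈ GS (α - a d)` and `(k γ_k)⁻¹ → ξ`. Stolz–Cesàro with the divergent weights `γ_k` gives the
asymptotics of `log H_n⁻²`. That `γ_k → 0` comes from the same mechanism: for `γ ∈ GS (-α)`,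
Stolz–Cesàro with weights `1 / k` shows `log γ_n ~ -α ∑_{k ≤ n} 1 / k → -∞`.
-/

open Real Topology Asymptotics

lemma sum_Icc_one_eq_sum_range {M : Type*} [AddCommMonoid M] (f : ℕ → M) (n : ℕ) :
    ∑ k ∈ Icc 1 n, f k = ∑ k ∈ range n, f (k + 1) := by
  rw [range_eq_Ico, sum_Ico_add', zero_add]
  rfl

lemma sum_Icc_one_sub_sub_one {G : Type*} [AddCommGroup G] (f : ℕ → G) (n : ℕ) :
    ∑ k ∈ Icc 1 n, (f k - f (k - 1)) = f n - f 0 := by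
  simpa [sum_Icc_one_eq_sum_range] using sum_range_sub f n

lemma tendsto_sum_Icc_one_div_atTop :
    Tendsto (fun n : ℕ => ∑ k ∈ Icc 1 n, (1 : ℝ) / k) atTop atTop := by
  simpa [sum_Icc_one_eq_sum_range] using Real.tendsto_sum_range_one_div_nat_succ_atTop

lemma tendsto_sum_div_sum_of_tendsto_div {a b : ℕ → ℝ} {l : ℝ} (hb : ∀ n, 1 ≤ n → 0 < b n)
    (hB : Tendsto (fun n => ∑ k ∈ Icc 1 n, b k) atTop atTop)
    (hab : Tendsto (fun n => a n / b n) atTop (𝓝 l)) :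
    Tendsto (fun n => (∑ k ∈ Icc 1 n, a k) / ∑ k ∈ Icc 1 n, b k) atTop (𝓝 l) := by
  have hlo : (fun n => a n - l * b n) =o[atTop] b := by
    rw [isLittleO_iff_tendsto' (eventually_atTop.2 ⟨1, fun n hn h => absurd h (hb n hn).ne'⟩)]
    refine (tendsto_sub_nhds_zero_iff.2 hab).congr' ?_
    filter_upwards [eventually_ge_atTop 1] with n hn
    field_simp [(hb n hn).ne']
  have hsum := (hlo.comp_tendsto (tendsto_add_atTop_nat 1)).sum_range
    (fun n => (hb (n + 1) n.succ_pos).le) (by simpa [sum_Icc_one_eq_sum_range] using hB)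
  simp only [Function.comp_def, ← sum_Icc_one_eq_sum_range b,
    ← sum_Icc_one_eq_sum_range (fun k => a k - l * b k)] at hsum
  have h := hsum.tendsto_div_nhds_zero.add_const l
  rw [zero_add] at h
  refine h.congr' ?_
  filter_upwards [hB.eventually_gt_atTop 0] with n hn
  rw [sum_sub_distrib, ← mul_sum]
  field_simp
  ring

lemma isLittleO_log_one_sub_add {ι : Type*} {l : Filter ι} {x : ι → ℝ}
    (hx : Tendsto x l (𝓝 0)) : (fun i => log (1 - x i) + x i) =o[l] x := by
  have hlog : (fun y => log y - (y - 1)) =o[𝓝 1] fun y => y - 1 := by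
    refine (hasDerivAt_log one_ne_zero).isLittleO.congr_left fun y => ?_
    simp
  have h1x : Tendsto (fun i => 1 - x i) l (𝓝 1) := by simpa using hx.const_sub 1
  exact isLittleO_neg_right.1 <|
    (hlog.comp_tendsto h1x).congr (fun i => by simp) (fun i => by simp)

lemma tendsto_neg_log_one_sub_div {ι : Type*} {l : Filter ι} {x : ι → ℝ}
    (hx : Tendsto x l (𝓝 0)) (hx0 : ∀ᶠ i in l, x i ≠ 0) :
    Tendsto (fun i => -log (1 - x i) / x i) l (𝓝 1) := by
  have h := (isLittleO_log_one_sub_add hx).tendsto_div_nhds_zero.const_sub 1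
  rw [sub_zero] at h
  refine h.congr' ?_
  filter_upwards [hx0] with i hi
  field_simp
  ring

namespace GS

variable {β : ℝ} {u : ℕ → ℝ}

theorem tendsto_mul_log_sub (hu : GS β u) :
    Tendsto (fun n : ℕ => n * (log (u n) - log (u (n - 1)))) atTop (𝓝 β) := by
  set t : ℕ → ℝ := fun n => 1 - u (n - 1) / u n
  have hnt : Tendsto (fun n : ℕ => n * t n) atTop (𝓝 β) := hu.2
  have ht : Tendsto t atTop (𝓝 0) := by
    have h := hnt.mul tendsto_inv_atTop_nhds_zero_nat
    rw [mul_zero] at h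
    refine h.congr' ?_
    filter_upwards [eventually_ne_atTop 0] with n hn
    field_simp
  have herr : Tendsto (fun n : ℕ => n * (log (1 - t n) + t n)) atTop (𝓝 0) :=
    (isLittleO_one_iff ℝ).1 <|
      ((isBigO_refl (fun n : ℕ => (n : ℝ)) atTop).mul_isLittleO
        (isLittleO_log_one_sub_add ht)).trans_isBigO (hnt.isBigO_one ℝ)
  have h := hnt.sub herr
  rw [sub_zero] at h
  refine h.congr' ?_
  obtain ⟨N, hN⟩ := eventually_atTop.1 hu.1
  filter_upwards [eventually_ge_atTop (N + 1)] with n hn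
  have hun := hN n (by omega)
  have hun' := hN (n - 1) (by omega)
  simp only [t, sub_sub_cancel, log_div hun'.ne' hun.ne']
  ring

theorem tendsto_zero_of_neg (hβ : β < 0) (hu : GS β u) : Tendsto u atTop (𝓝 0) := by
  have hratio : Tendsto (fun n : ℕ => (log (u n) - log (u (n - 1))) / (1 / n)) atTop (𝓝 β) :=
    hu.tendsto_mul_log_sub.congr fun n => by rw [div_div_eq_mul_div, div_one, mul_comm]
  have hmean := tendsto_sum_div_sum_of_tendsto_div (fun n hn => by positivity)
    tendsto_sum_Icc_one_div_atTop hratio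
  simp only [sum_Icc_one_sub_sub_one (fun k => log (u k))] at hmean
  have hlog : Tendsto (fun n => log (u n)) atTop atBot := by
    have hdiff : Tendsto (fun n => log (u n) - log (u 0)) atTop atBot := by
      refine (hmean.neg_mul_atTop hβ tendsto_sum_Icc_one_div_atTop).congr' ?_
      filter_upwards [tendsto_sum_Icc_one_div_atTop.eventually_gt_atTop 0] with n hn
      field_simp
    simpa using tendsto_atBot_add_const_right _ (log (u 0)) hdiff
  refine (tendsto_exp_atBot.comp hlog).congr' ?_
  filter_upwards [hu.1] with n hn
  exact exp_log hn

end GS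

lemma log_inv_prod_sq_mul_eq_sum {γ u : ℕ → ℝ} {n : ℕ} (hγ : ∀ j ∈ Icc 1 n, γ j ≠ 1)
    (hu : u n ≠ 0) :
    log (((∏ j ∈ Icc 1 n, (1 - γ j)) ^ 2 * u n)⁻¹) =
      ∑ k ∈ Icc 1 n, (-2 * log (1 - γ k) - (log (u k) - log (u (k - 1)))) - log (u 0) := by
  have hP : ∏ j ∈ Icc 1 n, (1 - γ j) ≠ 0 :=
    prod_ne_zero_iff.2 fun j hj => sub_ne_zero.2 (hγ j hj).symm
  rw [log_inv, log_mul (pow_ne_zero 2 hP) hu, log_pow,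
    log_prod fun j hj => sub_ne_zero.2 (hγ j hj).symm, sum_sub_distrib, ← mul_sum,
    sum_Icc_one_sub_sub_one]
  push_cast
  ring

lemma tendsto_atTop_of_tendsto_log_div {ι : Type*} {l : Filter ι} {x s : ι → ℝ} {c : ℝ}
    (hc : 0 < c) (hx : ∀ᶠ i in l, 0 < x i) (hs : Tendsto s l atTop)
    (h : Tendsto (fun i => log (x i) / s i) l (𝓝 c)) : Tendsto x l atTop := by
  have hlog : Tendsto (fun i => log (x i)) l atTop := by
    refine (h.pos_mul_atTop hc hs).congr' ?_
    filter_upwards [hs.eventually_gt_atTop 0] with i hi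
    field_simp
  refine (tendsto_exp_atTop.comp hlog).congr' ?_
  filter_upwards [hx] with i hi
  exact exp_log hi

theorem stmt_7_general (γ h : ℕ → ℝ) (α a d ξ : ℝ)
    (hγ : GS (-α) γ) (hα : 1/2 < α ∧ α ≤ 1)
    (hγ01 : ∀ n, 1 ≤ n → γ n ∈ Set.Ioo (0 : ℝ) 1)
    (hξlim : Tendsto (fun n : ℕ => ((n : ℝ) * γ n)⁻¹) atTop (nhds ξ))
    (hξ : 0 < 2 - (α - a * d) * ξ)
    (hgh : GS (α - a * d) (fun n => (γ n)⁻¹ * h n ^ d))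
    (hdiv : Tendsto (fun n => ∑ k ∈ Icc 1 n, γ k) atTop atTop) :
    Tendsto
      (fun n : ℕ =>
        Real.log (((∏ j ∈ Icc 1 n, (1 - γ j)) ^ 2 * (γ n)⁻¹ * h n ^ d)⁻¹)
          / ∑ k ∈ Icc 1 n, γ k)
      atTop (nhds (2 - ξ * (α - a * d))) ∧
    Tendsto
      (fun n : ℕ => ((∏ j ∈ Icc 1 n, (1 - γ j)) ^ 2 * (γ n)⁻¹ * h n ^ d)⁻¹)
      atTop atTop := by
  simp only [mul_assoc]
  set u : ℕ → ℝ := fun n => (γ n)⁻¹ * h n ^ d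
  have hγ_lim : Tendsto γ atTop (𝓝 0) := hγ.tendsto_zero_of_neg (by linarith [hα.1])
  have hstep : Tendsto (fun n => (-2 * log (1 - γ n) - (log (u n) - log (u (n - 1)))) / γ n)
      atTop (𝓝 (2 - ξ * (α - a * d))) := by
    have hγ_ne : ∀ᶠ n in atTop, γ n ≠ 0 :=
      eventually_atTop.2 ⟨1, fun n hn => (hγ01 n hn).1.ne'⟩
    have h := ((tendsto_neg_log_one_sub_div hγ_lim hγ_ne).const_mul 2).sub
      (hgh.tendsto_mul_log_sub.mul hξlim)
    rw [mul_one, mul_comm (α - a * d)] at h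
    refine h.congr' ?_
    filter_upwards [hγ_ne, eventually_ne_atTop 0] with n hn hn0
    field_simp
  have hmean := tendsto_sum_div_sum_of_tendsto_div (fun n hn => (hγ01 n hn).1) hdiv hstep
  have hlog : Tendsto (fun n => log (((∏ j ∈ Icc 1 n, (1 - γ j)) ^ 2 * u n)⁻¹) /
      ∑ k ∈ Icc 1 n, γ k) atTop (𝓝 (2 - ξ * (α - a * d))) := by
    have h := hmean.sub ((tendsto_const_nhds (x := log (u 0))).div_atTop hdiv)
    rw [sub_zero] at h
    refine h.congr' ?_
    filter_upwards [hgh.1] with n hn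
    rw [log_inv_prod_sq_mul_eq_sum (fun j hj => (hγ01 j (mem_Icc.1 hj).1).2.ne) hn.ne', sub_div]
  refine ⟨hlog, tendsto_atTop_of_tendsto_log_div (by linarith) ?_ hdiv hlog⟩
  filter_upwards [hgh.1] with n hn
  have hP : 0 < ∏ j ∈ Icc 1 n, (1 - γ j) :=
    prod_pos fun j hj => sub_pos.2 (hγ01 j (mem_Icc.1 hj).1).2
  positivity

/-- With `H n ^ 2 = Π n ^ 2 * γ n ⁻¹ * h n ^ d` and `(γ⁻¹ h^d) ∈ GS (α - a d)`,
one has `ln (H n ^ (-2)) = (2 - ξ (α - a d)) s_n + o(s_n)`; in particular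
`H n ^ (-2) → ∞`. -/
theorem stmt_7 (γ h : ℕ → ℝ) (α a d ξ : ℝ)
    (hγ : GS (-α) γ) (hα : 1/2 < α ∧ α ≤ 1)
    (hγ01 : ∀ n, 1 ≤ n → γ n ∈ Set.Ioo (0 : ℝ) 1)
    (hpos : ∀ n, 1 ≤ n → 0 < h n)
    (hξlim : Tendsto (fun n : ℕ => ((n : ℝ) * γ n)⁻¹) atTop (nhds ξ))
    (hξ : 0 < 2 - (α - a * d) * ξ)
    (hgh : GS (α - a * d) (fun n => (γ n)⁻¹ * h n ^ d))
    (hdiv : Tendsto (fun n => ∑ k ∈ Icc 1 n, γ k) atTop atTop) :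
    Tendsto
      (fun n : ℕ =>
        Real.log (((∏ j ∈ Icc 1 n, (1 - γ j)) ^ 2 * (γ n)⁻¹ * h n ^ d)⁻¹)
          / ∑ k ∈ Icc 1 n, γ k)
      atTop (nhds (2 - ξ * (α - a * d))) ∧
    Tendsto
      (fun n : ℕ => ((∏ j ∈ Icc 1 n, (1 - γ j)) ^ 2 * (γ n)⁻¹ * h n ^ d)⁻¹)
      atTop atTop :=
  stmt_7_general γ h α a d ξ hγ hα hγ01 hξlim hξ hgh hdiv
end
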